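/- Let M be a connected, compact smooth manifold without boundary and let H ∈ C(T*M × ℝ) satisfy the convexity assumption (H1) and the monotonicity assumption (H3). Then the following two properties are equivalent: (1) there exists a constant r₀ > 0 such that H(x,p,−r₀) → +∞ as |p|_x → ∞, uniformly in x ∈ M; (2) H(x,p,0) → +∞ as |p|_x → ∞, uniformly in x ∈ M. -/

import Mathlib

open scoped Manifold Topology NNReal
open Set Filter MeasureTheory

noncomputable section

/-! ## General setup

`M` is a compact connected manifold without boundary, modelled on a real normed space `E`
(via charts), and equipped with a metric (playing the role of the Riemannian distance).
Cotangent vectors at a point are represented, through the model-space trivialization, as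
continuous linear functionals `E →L[ℝ] ℝ`, and tangent vectors as elements of `E`; the
fiberwise norms `|·|ₓ` are the norms of `E` and of `E →L[ℝ] ℝ`. -/

variable {E : Type*} [NormedAddCommGroup E] [NormedSpace ℝ E]
variable {M : Type*} [MetricSpace M] [ChartedSpace E M]

/-- The differential of a real function on `M`, seen as a cotangent vector via the
model-space trivialization. -/
def mgrad (φ : M → ℝ) (x : M) : E →L[ℝ] ℝ :=
  mfderiv 𝓘(ℝ, E) 𝓘(ℝ, ℝ) φ x

/-- The velocity of a curve in `M`, seen as a tangent vector via the trivialization. -/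
def curveDeriv (ξ : ℝ → M) (s : ℝ) : E :=
  mfderiv 𝓘(ℝ, ℝ) 𝓘(ℝ, E) ξ s (1 : ℝ)

/-- `u` is a viscosity subsolution of `Ham (x, Du(x), u(x)) = c` on `M`. -/
def IsSubsolution (Ham : M → (E →L[ℝ] ℝ) → ℝ → ℝ) (c : ℝ) (u : M → ℝ) : Prop :=
  ∀ φ : M → ℝ, ContMDiff 𝓘(ℝ, E) 𝓘(ℝ, ℝ) 1 φ → ∀ x₀ : M,
    (∀ x, u x ≤ φ x) → φ x₀ = u x₀ →
      Ham x₀ (mgrad φ x₀) (u x₀) ≤ c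

/-- `u` is a viscosity supersolution of `Ham (x, Du(x), u(x)) = c` on `M`. -/
def IsSupersolution (Ham : M → (E →L[ℝ] ℝ) → ℝ → ℝ) (c : ℝ) (u : M → ℝ) : Prop :=
  ∀ ψ : M → ℝ, ContMDiff 𝓘(ℝ, E) 𝓘(ℝ, ℝ) 1 ψ → ∀ x₀ : M,
    (∀ x, ψ x ≤ u x) → ψ x₀ = u x₀ →
      c ≤ Ham x₀ (mgrad ψ x₀) (u x₀)

/-- `u` is a viscosity solution of `Ham (x, Du(x), u(x)) = c` on `M`. -/
def IsSolution (Ham : M → (E →L[ℝ] ℝ) → ℝ → ℝ) (c : ℝ) (u : M → ℝ) : Prop :=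
  IsSubsolution Ham c u ∧ IsSupersolution Ham c u

/-- `c` is the critical value of the Hamiltonian `G = G (x, p)`: it is the unique constant
`c` such that `G (x, Du(x)) = c` admits a continuous viscosity solution. -/
def IsCriticalValue (G : M → (E →L[ℝ] ℝ) → ℝ) (c : ℝ) : Prop :=
  (∃ u : M → ℝ, Continuous u ∧ IsSolution (fun x p _ => G x p) c u) ∧
    ∀ c' : ℝ, (∃ u : M → ℝ, Continuous u ∧ IsSolution (fun x p _ => G x p) c' u) → c' = c

/-- The Lagrangian associated to `Ham` through the Legendre-Fenchel transform. -/
def Lag (Ham : M → (E →L[ℝ] ℝ) → ℝ → ℝ) (x : M) (v : E) (u : ℝ) : ℝ :=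
  ⨆ p : E →L[ℝ] ℝ, (p v - Ham x p u)

/-- The partial derivative `L_u (x, v, 0)` of the Lagrangian with respect to `u` at `u = 0`. -/
def Luz (Ham : M → (E →L[ℝ] ℝ) → ℝ → ℝ) (x : M) (v : E) : ℝ :=
  deriv (fun u => Lag Ham x v u) 0

/-- The (Fréchet) subdifferential of a convex function `f` at `v`. -/
def subdiff (f : E → ℝ) (v : E) : Set (E →L[ℝ] ℝ) :=
  {p | ∀ v', f v + p (v' - v) ≤ f v'}

/-- The action function `h_t(x,y)` of the Lagrangian `LG` with critical value `c`. -/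
def actionF (LG : M → E → ℝ) (c : ℝ) (t : ℝ) (x y : M) : ℝ :=
  sInf {a : ℝ | ∃ ξ : ℝ → M, (∃ K : ℝ≥0, LipschitzOnWith K ξ (Icc 0 t)) ∧
    ξ 0 = x ∧ ξ t = y ∧
    a = ∫ s in (0:ℝ)..t, (LG (ξ s) (curveDeriv ξ s) + c)}

/-- The Peierls barrier `h(x,y)` of the Lagrangian `LG` with critical value `c`. -/
def peierls (LG : M → E → ℝ) (c : ℝ) (x y : M) : ℝ :=
  liminf (fun t => actionF LG c t x y) atTop

/-- A curve `ξ : (-∞, 0] → M` with `ξ 0 = x`, Lipschitz, calibrated by `w` for the contact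
Lagrangian with discount factor `lam`. -/
def IsMinCurve (Ham : M → (E →L[ℝ] ℝ) → ℝ → ℝ) (c : ℝ) (lam : ℝ) (w : M → ℝ)
    (x : M) (ξ : ℝ → M) : Prop :=
  (∃ K : ℝ≥0, LipschitzOnWith K ξ (Iic 0)) ∧ ξ 0 = x ∧
    ∀ t : ℝ, 0 < t →
      w x = w (ξ (-t)) +
        ∫ τ in (-t)..(0:ℝ), (Lag Ham (ξ τ) (curveDeriv ξ τ) (lam * w (ξ τ)) + c)

/-- The exponential weight `e^{-λ ∫₀ˢ L_u(ξ(τ), ξ'(τ), 0) dτ}`. -/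
def wgt (Ham : M → (E →L[ℝ] ℝ) → ℝ → ℝ) (lam : ℝ) (ξ : ℝ → M) (s : ℝ) : ℝ :=
  Real.exp (-(lam * ∫ τ in (0:ℝ)..s, Luz Ham (ξ τ) (curveDeriv ξ τ)))

/-- The error term `Δ^λ_x(s)` in the first-order Taylor expansion of the Lagrangian. -/
def DeltaFn (Ham : M → (E →L[ℝ] ℝ) → ℝ → ℝ) (lam : ℝ) (w : M → ℝ) (ξ : ℝ → M) (s : ℝ) : ℝ :=
  Lag Ham (ξ s) (curveDeriv ξ s) (lam * w (ξ s)) - Lag Ham (ξ s) (curveDeriv ξ s) 0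
    - lam * w (ξ s) * Luz Ham (ξ s) (curveDeriv ξ s)

section Measures

variable [MeasurableSpace M] [BorelSpace M] [MeasurableSpace E] [BorelSpace E]

/-- A closed probability measure on the tangent bundle `TM ≃ M × E`. -/
def IsClosedMeasure (μ : Measure (M × E)) : Prop :=
  IsProbabilityMeasure μ ∧ Integrable (fun q : M × E => ‖q.2‖) μ ∧
    ∀ φ : M → ℝ, ContMDiff 𝓘(ℝ, E) 𝓘(ℝ, ℝ) 1 φ →
      ∫ q : M × E, (mgrad φ q.1 : E →L[ℝ] ℝ) q.2 ∂μ = 0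

/-- A Mather measure for the Lagrangian `LG` with critical value `c`: a closed probability
measure on `TM ≃ M × E` with `∫ LG dμ = -c` (the minimum over closed measures). -/
def IsMatherMeasure (LG : M → E → ℝ) (c : ℝ) (μ : Measure (M × E)) : Prop :=
  IsClosedMeasure μ ∧ ∫ q : M × E, LG q.1 q.2 ∂μ = -c

/-- The probability measure `μ̃ˣ_λ` on `TM ≃ M × E` associated to a minimizing curve `ξ`,
defined by the weighted-average formula (3.5). -/
def IsDiscountedMeasure (Ham : M → (E →L[ℝ] ℝ) → ℝ → ℝ) (lam : ℝ) (ξ : ℝ → M)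
    (μ : Measure (M × E)) : Prop :=
  IsProbabilityMeasure μ ∧
    ∀ f : BoundedContinuousFunction (M × E) ℝ,
      ∫ q, f q ∂μ =
        (∫ s in Iic (0:ℝ), f (ξ s, curveDeriv ξ s) * wgt Ham lam ξ s) /
          (∫ s in Iic (0:ℝ), wgt Ham lam ξ s)

end Measures

/-! The forward implication is monotonicity in `u`. Conversely, let `C` bound `H(·, 0, 0)` and
choose `R₀` with `H(x, p, 0) ≥ C + 2` on `|p| = R₀`. By compactness of `M × {|p| = R₀}` the
shift to `u = -r₀`, for `r₀` small, keeps `H ≥ C + 1` there, and since `H(x, 0, -r₀) ≤ C` by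
monotonicity, convexity in `p` propagates this gap linearly along rays:
`H(x, p, -r₀) ≥ C + |p| / R₀` for `|p| ≥ R₀`. -/

def UniformlyCoercive {X V : Type*} [Norm V] (G : X → V → ℝ) : Prop :=
  ∀ A : ℝ, ∃ R : ℝ, ∀ x p, R ≤ ‖p‖ → A ≤ G x p

theorem UniformlyCoercive.mono {X V : Type*} [Norm V] {F G : X → V → ℝ}
    (hF : UniformlyCoercive F) (hFG : ∀ x p, F x p ≤ G x p) : UniformlyCoercive G := fun A ↦
  (hF A).imp fun _ hR x p hp ↦ (hR x p hp).trans (hFG x p)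

theorem ConvexOn.add_mul_div_le_of_forall_norm_eq {V : Type*} [NormedAddCommGroup V]
    [NormedSpace ℝ V] {f : V → ℝ} (hf : ConvexOn ℝ univ f) {C δ R : ℝ} (hR : 0 < R)
    (h0 : f 0 ≤ C) (hsphere : ∀ q, ‖q‖ = R → C + δ ≤ f q) {p : V} (hp : R ≤ ‖p‖) :
    C + δ * (‖p‖ / R) ≤ f p := by
  have hp0 : 0 < ‖p‖ := hR.trans_le hp
  set t := R / ‖p‖
  have ht0 : 0 < t := div_pos hR hp0
  have ht1 : t ≤ 1 := (div_le_one hp0).2 hp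
  have hnorm : ‖t • p‖ = R := by
    rw [norm_smul, Real.norm_of_nonneg ht0.le, div_mul_cancel₀ _ hp0.ne']
  have hconv : f (t • p) ≤ t * f p + (1 - t) * f 0 := by
    simpa using hf.2 (mem_univ p) (mem_univ 0) ht0.le (sub_nonneg.2 ht1) (by ring)
  have hslope : δ ≤ t * (f p - C) := by
    nlinarith [hsphere _ hnorm, mul_le_mul_of_nonneg_left h0 (sub_nonneg.2 ht1)]
  have ht : t * (‖p‖ / R) = 1 := by simp only [t]; field_simp
  calc C + δ * (‖p‖ / R) ≤ C + t * (f p - C) * (‖p‖ / R) := by gcongr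
    _ = f p := by rw [mul_right_comm, ht]; ring

theorem UniformlyCoercive.of_convexOn {X V : Type*} [NormedAddCommGroup V] [NormedSpace ℝ V]
    {G : X → V → ℝ} (hG : ∀ x, ConvexOn ℝ univ (G x)) {C δ R : ℝ} (hδ : 0 < δ) (hR : 0 < R)
    (h0 : ∀ x, G x 0 ≤ C) (hsphere : ∀ x q, ‖q‖ = R → C + δ ≤ G x q) :
    UniformlyCoercive G := by
  refine fun A ↦ ⟨max R (R * (A - C) / δ), fun x p hp ↦ ?_⟩
  have hpR : R ≤ ‖p‖ := (le_max_left _ _).trans hp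
  have hgrowth : A - C ≤ δ * (‖p‖ / R) := by
    have := (le_max_right _ _).trans hp
    rw [div_le_iff₀ hδ] at this
    rw [mul_div_assoc', le_div_iff₀ hR]
    linarith
  linarith [(hG x).add_mul_div_le_of_forall_norm_eq hR (h0 x) (hsphere x) hpR]

theorem IsCompact.eventually_forall_lt {X Y : Type*} [TopologicalSpace X] [TopologicalSpace Y]
    {K : Set X} (hK : IsCompact K) {F : X → Y → ℝ} (hF : Continuous (Function.uncurry F))
    {y₀ : Y} {C : ℝ} (h : ∀ k ∈ K, C < F k y₀) : ∀ᶠ y in 𝓝 y₀, ∀ k ∈ K, C < F k y :=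
  hK.eventually_forall_of_forall_eventually fun k hk ↦
    (hF.comp continuous_swap).continuousAt.eventually (lt_mem_nhds (h k hk))

theorem statement16_general
    {E : Type*} [NormedAddCommGroup E] [NormedSpace ℝ E]
    {M : Type*} [MetricSpace M] [CompactSpace M] [ConnectedSpace M]
    [ChartedSpace E M]
    (Ham : M → (E →L[ℝ] ℝ) → ℝ → ℝ)
    (hHcont : Continuous fun q : (M × (E →L[ℝ] ℝ)) × ℝ => Ham q.1.1 q.1.2 q.2)
    (hH1 : ∀ (x : M) (u : ℝ), ConvexOn ℝ Set.univ fun p : E →L[ℝ] ℝ => Ham x p u)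
    (hH3 : ∀ (x : M) (p : E →L[ℝ] ℝ), StrictMono fun u => Ham x p u) :
    (∃ r₀ : ℝ, 0 < r₀ ∧ ∀ A : ℝ, ∃ R : ℝ, ∀ (x : M) (p : E →L[ℝ] ℝ),
      R ≤ ‖p‖ → A ≤ Ham x p (-r₀)) ↔
    (∀ A : ℝ, ∃ R : ℝ, ∀ (x : M) (p : E →L[ℝ] ℝ), R ≤ ‖p‖ → A ≤ Ham x p 0) := by
  have hmono : ∀ x p {u v : ℝ}, u ≤ v → Ham x p u ≤ Ham x p v :=
    fun x p _ _ huv ↦ (hH3 x p).monotone huv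
  refine ⟨fun ⟨r₀, hr₀, h⟩ ↦ UniformlyCoercive.mono h fun x p ↦ hmono x p (by linarith), ?_⟩
  intro h
  have : FiniteDimensional ℝ E := FiniteDimensional.of_locallyCompact_manifold M 𝓘(ℝ, E)
  obtain ⟨C, hC⟩ := (isCompact_range (hHcont.comp (by fun_prop :
    Continuous fun x : M ↦ ((x, (0 : E →L[ℝ] ℝ)), (0 : ℝ))))).bddAbove
  obtain ⟨R, hR⟩ := h (C + 2)
  set R₀ := max R 1
  have hsphere : ∀ k ∈ (univ : Set M) ×ˢ Metric.sphere (0 : E →L[ℝ] ℝ) R₀,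
      C + 1 < Ham k.1 k.2 0 := fun k hk ↦ by
    linarith [hR k.1 k.2 ((le_max_left _ _).trans (mem_sphere_zero_iff_norm.1 hk.2).ge)]
  have hnear : ∀ᶠ u in 𝓝 (0 : ℝ), ∀ k ∈ (univ : Set M) ×ˢ Metric.sphere (0 : E →L[ℝ] ℝ) R₀,
      C + 1 < Ham k.1 k.2 u :=
    (isCompact_univ.prod (isCompact_sphere _ _)).eventually_forall_lt
      (F := fun k u ↦ Ham k.1 k.2 u) hHcont hsphere
  obtain ⟨u, hu, hu0⟩ :=
    ((hnear.filter_mono nhdsWithin_le_nhds).and (self_mem_nhdsWithin (s := Iio 0))).exists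
  refine ⟨-u, neg_pos.2 hu0, ?_⟩
  rw [neg_neg]
  exact UniformlyCoercive.of_convexOn (fun x ↦ hH1 x u) one_pos (lt_max_of_lt_right one_pos)
    (fun x ↦ (hmono x 0 hu0.le).trans (hC ⟨x, rfl⟩))
    (fun x q hq ↦ (hu (x, q) ⟨mem_univ x, mem_sphere_zero_iff_norm.2 hq⟩).le)

theorem statement16
    {E : Type*} [NormedAddCommGroup E] [NormedSpace ℝ E]
    {M : Type*} [MetricSpace M] [CompactSpace M] [ConnectedSpace M]
    [ChartedSpace E M] [IsManifold 𝓘(ℝ, E) (⊤ : ℕ∞) M]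
    (Ham : M → (E →L[ℝ] ℝ) → ℝ → ℝ)
    (hHcont : Continuous fun q : (M × (E →L[ℝ] ℝ)) × ℝ => Ham q.1.1 q.1.2 q.2)
    (hH1 : ∀ (x : M) (u : ℝ), ConvexOn ℝ Set.univ fun p : E →L[ℝ] ℝ => Ham x p u)
    (hH3 : ∀ (x : M) (p : E →L[ℝ] ℝ), StrictMono fun u => Ham x p u) :
    (∃ r₀ : ℝ, 0 < r₀ ∧ ∀ A : ℝ, ∃ R : ℝ, ∀ (x : M) (p : E →L[ℝ] ℝ),
      R ≤ ‖p‖ → A ≤ Ham x p (-r₀)) ↔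
    (∀ A : ℝ, ∃ R : ℝ, ∀ (x : M) (p : E →L[ℝ] ℝ), R ≤ ‖p‖ → A ≤ Ham x p 0) :=
  statement16_general Ham hHcont hH1 hH3
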